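/- Let I = {1,…,m}, let 0 = k₀ < k₁ < … < k_p = m, and let S = {φ_1,…,φ_m} be injective contractions of ℝ^d such that φ_j = φ_{k_i} whenever k_{i−1} < j ≤ k_i (for 1 ≤ i ≤ p), and such that the images φ_{k_1}(Λ), …, φ_{k_p}(Λ) of the limit set Λ are pairwise disjoint. Then for every ω ∈ Σ_I⁺ and every n ≥ 1, β_n(π(ω)) = Π_{s=1}^n w(ω_s), where w(j) = k_i − k_{i−1} for the unique index i with k_{i−1} < j ≤ k_i. -/

import Mathlib

open MeasureTheory Filter

noncomputable section

/-- Composition `φ_{η 0} ∘ φ_{η 1} ∘ … ∘ φ_{η (n-1)}` of the maps of an iterated function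
system along a finite word `η`. -/
def comps {α E : Type*} (φ : α → E → E) {n : ℕ} (η : Fin n → α) : E → E :=
  (List.ofFn fun k => φ (η k)).foldr (· ∘ ·) id

/-- `β_n(x)`: the number of words `(η_1,…,η_n) ∈ I^n` with
`x ∈ φ_{η_1}∘…∘φ_{η_n}(Λ)`. -/
def ifsBeta {m : ℕ} {E : Type*} (φ : Fin m → E → E) (Λ : Set E) (n : ℕ) (x : E) : ℕ :=
  Set.ncard {η : Fin n → Fin m | x ∈ comps φ η '' Λ}

/-- `μ` is the uniform Bernoulli measure on `I^ℕ` (`|I| = m`): every cylinder of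
length `n` has measure `(1/m)^n`. This is the measure of maximal entropy for the shift. -/
def IsUniformBernoulli (m : ℕ) (μ : Measure (ℕ → Fin m)) : Prop :=
  ∀ (n : ℕ) (η : Fin n → Fin m),
    μ {ω | ∀ k : Fin n, ω (k : ℕ) = η k} = (1 / (m : ENNReal)) ^ n

/-- The system `{φ_i, i ∈ I}` consists of injective contractions, with nonempty compact
limit set `Λ = ⋃_i φ_i(Λ)`, and `π` is the canonical (continuous) coding map onto `Λ`. -/
structure IsIFSSetup {m d : ℕ} (φ : Fin m → EuclideanSpace ℝ (Fin d) → EuclideanSpace ℝ (Fin d))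
    (Λ : Set (EuclideanSpace ℝ (Fin d))) (π : (ℕ → Fin m) → EuclideanSpace ℝ (Fin d)) : Prop where
  inj : ∀ i, Function.Injective (φ i)
  contr : ∀ i, ∃ r : NNReal, r < 1 ∧ LipschitzWith r (φ i)
  compact : IsCompact Λ
  nonempty : Λ.Nonempty
  selfSimilar : Λ = ⋃ i, φ i '' Λ
  pi_continuous : Continuous π
  pi_mem : ∀ ω, π ω ∈ Λ
  pi_eq : ∀ ω, π ω = φ (ω 0) (π fun k => ω (k + 1))

/-! Distinct maps of the system have disjoint images of `Λ`, while `π ω ∈ φ_{ω₀}(Λ)`; hence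
`π ω ∈ φ_j(Λ)` exactly when `φ_j = φ_{ω₀}`, and injectivity strips off the first letter. So
`π ω ∈ φ_{η₁} ∘ ⋯ ∘ φ_{ηₙ}(Λ)` iff `φ_{η_s} = φ_{ω_s}` for every `s`, and `β_n(π ω)` counts the
words letter by letter: the choices for the `s`-th letter form the block of `ω_s`. -/

open Function Set

theorem comps_zero {α E : Type*} (φ : α → E → E) (η : Fin 0 → α) : comps φ η = id := by
  simp [comps]

theorem comps_succ {α E : Type*} (φ : α → E → E) {n : ℕ} (η : Fin (n + 1) → α) :
    comps φ η = φ (η 0) ∘ comps φ (Fin.tail η) := by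
  simp [comps, List.ofFn_succ, Fin.tail]

theorem mapsTo_comps {α E : Type*} {φ : α → E → E} {Λ : Set E} (h : ∀ i, MapsTo (φ i) Λ Λ) :
    ∀ {n : ℕ} (η : Fin n → α), MapsTo (comps φ η) Λ Λ
  | 0, η => by simpa [comps_zero] using mapsTo_id Λ
  | n + 1, η => by rw [comps_succ]; exact (h _).comp (mapsTo_comps h _)

theorem ncard_setOf_forall_mem {ι α : Type*} [Fintype ι] (A : ι → Set α) :
    {f : ι → α | ∀ i, f i ∈ A i}.ncard = ∏ i, (A i).ncard := by
  rw [show {f : ι → α | ∀ i, f i ∈ A i} = univ.pi A by ext; simp, ← Nat.card_coe_set_eq,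
    Nat.card_congr (Equiv.Set.univPi A), Nat.card_pi]
  rfl

theorem Fin.exists_castSucc_le_lt_succ {p : ℕ} (k : Fin (p + 1) → ℕ) {x : ℕ} (h0 : k 0 ≤ x)
    (hx : x < k (Fin.last p)) : ∃ i : Fin p, k i.castSucc ≤ x ∧ x < k i.succ := by
  induction p with
  | zero => exact absurd hx (not_lt.2 h0)
  | succ p ih =>
    by_cases hlt : x < k (Fin.last p).castSucc
    · obtain ⟨i, hi⟩ := ih (k ∘ Fin.castSucc) h0 hlt
      exact ⟨i.castSucc, by simpa using hi⟩
    · exact ⟨Fin.last p, not_lt.1 hlt, hx⟩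

theorem Fin.ncard_setOf_le_val_lt {m a b : ℕ} (hb : b ≤ m) :
    {j : Fin m | a ≤ j ∧ (j : ℕ) < b}.ncard = b - a := by
  rw [← ncard_Ico_nat, ← ncard_preimage_of_injective_subset_range Fin.val_injective]
  · rfl
  · intro x hx; exact ⟨⟨x, hx.2.trans_le hb⟩, rfl⟩

section ExactOverlaps

variable {ι E : Type*} {φ : ι → E → E} {Λ : Set E} {π : (ℕ → ι) → E}

theorem mem_image_iff_apply_eq_and_mem (hinj : ∀ i, Injective (φ i))
    (hπ : ∀ ω, π ω = φ (ω 0) (π fun k => ω (k + 1))) (hπΛ : ∀ ω, π ω ∈ Λ)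
    (hexact : ∀ i j, φ i ≠ φ j → Disjoint (φ i '' Λ) (φ j '' Λ))
    {T : Set E} (hT : T ⊆ Λ) (ω : ℕ → ι) (i : ι) :
    π ω ∈ φ i '' T ↔ φ i = φ (ω 0) ∧ π (fun k => ω (k + 1)) ∈ T := by
  constructor
  · rintro ⟨x, hx, hxω⟩
    have hφ : φ i = φ (ω 0) := by
      by_contra hne
      refine disjoint_left.1 (hexact _ _ hne) ⟨x, hT hx, hxω⟩ ?_
      rw [hπ ω]
      exact mem_image_of_mem _ (hπΛ _)
    rw [hπ, hφ] at hxω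
    exact ⟨hφ, hinj _ hxω ▸ hx⟩
  · rintro ⟨hφ, hT⟩
    exact ⟨_, hT, by rw [hφ, hπ ω]⟩

theorem mem_image_comps_iff (hinj : ∀ i, Injective (φ i)) (hmaps : ∀ i, MapsTo (φ i) Λ Λ)
    (hπ : ∀ ω, π ω = φ (ω 0) (π fun k => ω (k + 1))) (hπΛ : ∀ ω, π ω ∈ Λ)
    (hexact : ∀ i j, φ i ≠ φ j → Disjoint (φ i '' Λ) (φ j '' Λ)) :
    ∀ {n : ℕ} (ω : ℕ → ι) (η : Fin n → ι), π ω ∈ comps φ η '' Λ ↔ ∀ s, φ (η s) = φ (ω s)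
  | 0, ω, η => by simp [comps_zero, hπΛ]
  | n + 1, ω, η => by
    rw [comps_succ, image_comp, Fin.forall_fin_succ,
      mem_image_iff_apply_eq_and_mem hinj hπ hπΛ hexact (mapsTo_comps hmaps _).image_subset,
      mem_image_comps_iff hinj hmaps hπ hπΛ hexact]
    rfl

end ExactOverlaps

theorem ifsBeta_eq_prod_ncard_fiber {m : ℕ} {E : Type*} {φ : Fin m → E → E} {Λ : Set E}
    {π : (ℕ → Fin m) → E} (hinj : ∀ i, Injective (φ i)) (hmaps : ∀ i, MapsTo (φ i) Λ Λ)
    (hπ : ∀ ω, π ω = φ (ω 0) (π fun k => ω (k + 1))) (hπΛ : ∀ ω, π ω ∈ Λ)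
    (hexact : ∀ i j, φ i ≠ φ j → Disjoint (φ i '' Λ) (φ j '' Λ)) (ω : ℕ → Fin m) (n : ℕ) :
    ifsBeta φ Λ n (π ω) = ∏ s : Fin n, {j | φ j = φ (ω s)}.ncard := by
  rw [ifsBeta, ← ncard_setOf_forall_mem]
  congr 1; ext η
  exact mem_image_comps_iff hinj hmaps hπ hπΛ hexact ω η

theorem IsIFSSetup.mapsTo {m d : ℕ}
    {φ : Fin m → EuclideanSpace ℝ (Fin d) → EuclideanSpace ℝ (Fin d)}
    {Λ : Set (EuclideanSpace ℝ (Fin d))} {π : (ℕ → Fin m) → EuclideanSpace ℝ (Fin d)}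
    (hS : IsIFSSetup φ Λ π) (i : Fin m) : MapsTo (φ i) Λ Λ := fun x hx => by
  rw [hS.selfSimilar]
  exact mem_iUnion_of_mem i (mem_image_of_mem _ hx)

/-- In the exact-overlap block setting, for every `ω` and every `n ≥ 1`,
`β_n(π ω) = Π_{s=1}^n w(ω_s)` where `w(j)` is the size of the block containing `j`. -/
theorem beta_eq_prod_block_sizes {m d p : ℕ}
    (φ : Fin m → EuclideanSpace ℝ (Fin d) → EuclideanSpace ℝ (Fin d))
    (Λ : Set (EuclideanSpace ℝ (Fin d))) (π : (ℕ → Fin m) → EuclideanSpace ℝ (Fin d))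
    (hS : IsIFSSetup φ Λ π)
    (k : Fin (p + 1) → ℕ) (hk0 : k 0 = 0) (hkm : k (Fin.last p) = m) (hkmono : StrictMono k)
    (hblock : ∀ i : Fin p, ∀ j j' : Fin m,
      k i.castSucc ≤ (j : ℕ) → (j : ℕ) < k i.succ →
      k i.castSucc ≤ (j' : ℕ) → (j' : ℕ) < k i.succ → φ j = φ j')
    (hdisj : ∀ i i' : Fin p, i ≠ i' → ∀ j j' : Fin m,
      k i.castSucc ≤ (j : ℕ) → (j : ℕ) < k i.succ →
      k i'.castSucc ≤ (j' : ℕ) → (j' : ℕ) < k i'.succ →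
      Disjoint (φ j '' Λ) (φ j' '' Λ))
    (w : Fin m → ℕ)
    (hw : ∀ i : Fin p, ∀ j : Fin m,
      k i.castSucc ≤ (j : ℕ) → (j : ℕ) < k i.succ → w j = k i.succ - k i.castSucc) :
    ∀ (ω : ℕ → Fin m) (n : ℕ), 1 ≤ n →
      ifsBeta φ Λ n (π ω) = ∏ s : Fin n, w (ω (s : ℕ)) := by
  intro ω n _
  have hcover (j : Fin m) : ∃ i : Fin p, k i.castSucc ≤ j ∧ (j : ℕ) < k i.succ :=
    Fin.exists_castSucc_le_lt_succ k (hk0.symm ▸ Nat.zero_le _) (hkm ▸ j.isLt)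
  have hexact (j j' : Fin m) (hne : φ j ≠ φ j') : Disjoint (φ j '' Λ) (φ j' '' Λ) := by
    obtain ⟨i, h1, h2⟩ := hcover j
    obtain ⟨i', h1', h2'⟩ := hcover j'
    obtain rfl | hii' := eq_or_ne i i'
    · exact absurd (hblock i j j' h1 h2 h1' h2') hne
    · exact hdisj i i' hii' j j' h1 h2 h1' h2'
  have hfiber {i : Fin p} {j₀ : Fin m} (h1 : k i.castSucc ≤ j₀) (h2 : (j₀ : ℕ) < k i.succ) :
      {j | φ j = φ j₀} = {j : Fin m | k i.castSucc ≤ j ∧ (j : ℕ) < k i.succ} := by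
    ext j
    refine ⟨fun hφ => ?_, fun ⟨h1', h2'⟩ => hblock i j j₀ h1' h2' h1 h2⟩
    obtain ⟨i', h1', h2'⟩ := hcover j
    obtain rfl | hii' := eq_or_ne i' i
    · exact ⟨h1', h2'⟩
    · have := hdisj i' i hii' j j₀ h1' h2' h1 h2
      rw [hφ, disjoint_self, bot_eq_empty, image_eq_empty] at this
      exact absurd this hS.nonempty.ne_empty
  rw [ifsBeta_eq_prod_ncard_fiber hS.inj hS.mapsTo hS.pi_eq hS.pi_mem hexact]
  refine Finset.prod_congr rfl fun s _ => ?_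
  obtain ⟨i, h1, h2⟩ := hcover (ω s)
  rw [hfiber h1 h2, hw i _ h1 h2,
    Fin.ncard_setOf_le_val_lt (hkm ▸ hkmono.monotone (Fin.le_last _))]

end
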